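/- Suppose U ξ = ξ. Then for every x ∈ H with ‖x‖ ≤ 1, the equality U(A x) + ξ = (⟨x,ξ⟩ + a)·x holds if and only if x = ξ/‖ξ‖ or x = −ξ/‖ξ‖. In particular, the induced isometry x ↦ (⟨x,ξ⟩ + a)⁻¹·(U(A x) + ξ) of the Carathéodory-metric Hilbert ball has no fixed point in the open unit ball and exactly two fixed points, both on the unit sphere (it is hyperbolic). -/

import Mathlib

open scoped InnerProductSpace

/-!
Write `x = α • ξ + y` with `y ⟂ ξ`. The map `A` scales `ξ` by `a` and fixes `ξ⟂`, and `U` fixes `ξ`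
and hence preserves `ξ⟂`, so the fixed-point equation splits into a scalar equation along `ξ`,
`α a + 1 = (α ‖ξ‖² + a) α`, i.e. `α = ±‖ξ‖⁻¹`, and the eigen-equation `U y = (a ± ‖ξ‖) y` on `ξ⟂`.
Since `a² = 1 + ‖ξ‖²` forces `|a ± ‖ξ‖| ≠ 1` while `U` is isometric, `y = 0`.
-/

theorem abs_add_ne_one_of_sq_eq_one_add_sq {a r : ℝ} (hr : r ≠ 0) (h : a ^ 2 = 1 + r ^ 2) :
    |a + r| ≠ 1 := by
  intro h1
  have hsq : (a + r) ^ 2 = 1 := by rw [← sq_abs, h1, one_pow]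
  have : r * (r + a) = 0 := by linear_combination (hsq - h) / 2
  rcases mul_eq_zero.1 this with h0 | h0
  · exact hr h0
  · nlinarith

theorem mul_add_one_eq_iff_eq_inv_or_eq_neg_inv {K : Type*} [Field K] {α a r : K} (hr : r ≠ 0) :
    α * a + 1 = (α * r ^ 2 + a) * α ↔ α = r⁻¹ ∨ α = -r⁻¹ := by
  rw [← mul_self_eq_mul_self_iff]
  constructor <;> intro h
  · field_simp; linear_combination -h
  · field_simp at h; linear_combination -h

theorem RCLike.norm_inv_mul_sq_add_ne_one {𝕜 : Type*} [RCLike 𝕜] {a r s : ℝ} (hr : r ≠ 0)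
    (hs : s ^ 2 = r ^ 2) (ha : a ^ 2 = 1 + r ^ 2) : ‖(s : 𝕜)⁻¹ * (r : 𝕜) ^ 2 + a‖ ≠ 1 := by
  have hs0 : s ≠ 0 := by rintro rfl; exact hr (by simpa using hs.symm)
  have hc : (s : 𝕜)⁻¹ * (r : 𝕜) ^ 2 + a = ((a + s : ℝ) : 𝕜) := by
    rw [← RCLike.ofReal_pow, ← hs]
    push_cast
    field_simp
    ring
  rw [hc, RCLike.norm_ofReal]
  exact abs_add_ne_one_of_sq_eq_one_add_sq hs0 (hs ▸ ha)

section InnerProduct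

variable {𝕜 E : Type*} [RCLike 𝕜] [NormedAddCommGroup E] [InnerProductSpace 𝕜 E]

theorem exists_eq_smul_add_of_inner_eq_zero {ξ : E} (hξ : ξ ≠ 0) (x : E) :
    ∃ (α : 𝕜) (y : E), ⟪ξ, y⟫_𝕜 = 0 ∧ x = α • ξ + y := by
  refine ⟨⟪ξ, x⟫_𝕜 / ⟪ξ, ξ⟫_𝕜, x - (⟪ξ, x⟫_𝕜 / ⟪ξ, ξ⟫_𝕜) • ξ, ?_, by abel⟩
  rw [inner_sub_right, inner_smul_right, div_mul_cancel₀ _ (inner_self_ne_zero.2 hξ), sub_self]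

theorem smul_add_eq_smul_add_iff_of_inner_eq_zero {ξ w w' : E} (hξ : ξ ≠ 0)
    (hw : ⟪ξ, w⟫_𝕜 = 0) (hw' : ⟪ξ, w'⟫_𝕜 = 0) {c d : 𝕜} :
    c • ξ + w = d • ξ + w' ↔ c = d ∧ w = w' := by
  refine ⟨fun h => ?_, fun ⟨hcd, hww'⟩ => hcd ▸ hww' ▸ rfl⟩
  have hinner := congrArg (⟪ξ, ·⟫_𝕜) h
  simp only [inner_add_right, inner_smul_right, hw, hw', add_zero] at hinner
  obtain rfl := mul_right_cancel₀ (inner_self_ne_zero.2 hξ) hinner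
  exact ⟨rfl, add_left_cancel h⟩

theorem ContinuousLinearMap.apply_eq_smul_iff_of_mem_unitary [CompleteSpace E] {U : E →L[𝕜] E}
    (hU : U ∈ unitary (E →L[𝕜] E)) {c : 𝕜} (hc : ‖c‖ ≠ 1) {y : E} : U y = c • y ↔ y = 0 := by
  refine ⟨fun h => ?_, fun h => by simp [h]⟩
  have hnorm := U.norm_map_of_mem_unitary hU y
  rw [h, norm_smul] at hnorm
  by_contra hy
  exact hc (mul_right_cancel₀ (norm_ne_zero_iff.2 hy) (hnorm.trans (one_mul _).symm))

theorem inner_add_ofReal_ne_zero {ξ x : E} {a : ℝ} (h : ‖ξ‖ * ‖x‖ < a) :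
    ⟪ξ, x⟫_𝕜 + (a : 𝕜) ≠ 0 := by
  intro h0
  have hle := norm_inner_le_norm (𝕜 := 𝕜) ξ x
  rw [eq_neg_of_add_eq_zero_left h0, norm_neg, RCLike.norm_ofReal] at hle
  linarith [le_abs_self a]

theorem apply_smul_add_of_inner_eq_zero {A : E → E} {ξ y : E} {a : ℝ} (hξ : ξ ≠ 0)
    (hA : ∀ x : E, A x = x + ((((a - 1) / ‖ξ‖ ^ 2 : ℝ) : 𝕜) * ⟪ξ, x⟫_𝕜) • ξ)
    (hy : ⟪ξ, y⟫_𝕜 = 0) (α : 𝕜) :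
    A (α • ξ + y) = (α * a) • ξ + y := by
  have hr : (‖ξ‖ : 𝕜) ≠ 0 := by simpa using hξ
  rw [hA, inner_add_right, inner_smul_right, hy, inner_self_eq_norm_sq_to_K]
  match_scalars
  · field_simp; ring
  · rfl

theorem apply_add_eq_inner_add_smul_iff [CompleteSpace E] {ξ : E} (hξ : ξ ≠ 0) {a : ℝ}
    (ha : a ^ 2 = 1 + ‖ξ‖ ^ 2) {A : E → E}
    (hA : ∀ x : E, A x = x + ((((a - 1) / ‖ξ‖ ^ 2 : ℝ) : 𝕜) * ⟪ξ, x⟫_𝕜) • ξ)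
    {U : E →L[𝕜] E} (hU : U ∈ unitary (E →L[𝕜] E)) (hUξ : U ξ = ξ) (x : E) :
    U (A x) + ξ = (⟪ξ, x⟫_𝕜 + (a : 𝕜)) • x ↔
      x = (‖ξ‖ : 𝕜)⁻¹ • ξ ∨ x = -((‖ξ‖ : 𝕜)⁻¹ • ξ) := by
  obtain ⟨α, y, hy, rfl⟩ := exists_eq_smul_add_of_inner_eq_zero (𝕜 := 𝕜) hξ x
  have hr : ‖ξ‖ ≠ 0 := norm_ne_zero_iff.2 hξ
  have hUy : ⟪ξ, U y⟫_𝕜 = 0 := by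
    rw [← hUξ, U.inner_map_map_of_mem_unitary hU, hy]
  have hlhs : U (A (α • ξ + y)) + ξ = (α * a + 1) • ξ + U y := by
    rw [apply_smul_add_of_inner_eq_zero hξ hA hy, map_add, map_smul, hUξ]
    module
  have hrhs : (⟪ξ, α • ξ + y⟫_𝕜 + (a : 𝕜)) • (α • ξ + y) =
      ((α * (‖ξ‖ : 𝕜) ^ 2 + a) * α) • ξ + (α * (‖ξ‖ : 𝕜) ^ 2 + a) • y := by
    rw [inner_add_right, inner_smul_right, hy, inner_self_eq_norm_sq_to_K]
    module
  have hsol (β : 𝕜) : α • ξ + y = β • ξ ↔ α = β ∧ y = 0 := by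
    simpa using smul_add_eq_smul_add_iff_of_inner_eq_zero hξ hy (inner_zero_right ξ)
      (c := α) (d := β)
  rw [hlhs, hrhs, smul_add_eq_smul_add_iff_of_inner_eq_zero hξ hUy
    (by rw [inner_smul_right, hy, mul_zero]),
    mul_add_one_eq_iff_eq_inv_or_eq_neg_inv (by exact_mod_cast hr), ← neg_smul, hsol, hsol]
  constructor
  · rintro ⟨rfl | rfl, hUy⟩
    · have hc := RCLike.norm_inv_mul_sq_add_ne_one (𝕜 := 𝕜) hr rfl ha
      exact .inl ⟨rfl, (U.apply_eq_smul_iff_of_mem_unitary hU hc).1 hUy⟩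
    · have hc := RCLike.norm_inv_mul_sq_add_ne_one (𝕜 := 𝕜) hr (neg_sq _) ha
      exact .inr ⟨rfl, (U.apply_eq_smul_iff_of_mem_unitary hU (by simpa using hc)).1 hUy⟩
  · rintro (⟨rfl, rfl⟩ | ⟨rfl, rfl⟩) <;> simp

end InnerProduct

theorem stmt13 {H : Type*} [NormedAddCommGroup H] [InnerProductSpace ℂ H] [CompleteSpace H]
    (ξ : H) (hξ : ξ ≠ 0) (a : ℝ) (ha : a = Real.sqrt (1 + ‖ξ‖ ^ 2))
    (A : H →L[ℂ] H)
    (hA : ∀ x : H, A x = x + ((((a - 1) / ‖ξ‖ ^ 2 : ℝ) : ℂ) * ⟪ξ, x⟫_ℂ) • ξ)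
    (U : H →L[ℂ] H) (hU : U ∈ unitary (H →L[ℂ] H)) (hUξ : U ξ = ξ) :
    (∀ x : H, ‖x‖ ≤ 1 →
        (U (A x) + ξ = (⟪ξ, x⟫_ℂ + (a : ℂ)) • x ↔
          x = (‖ξ‖ : ℂ)⁻¹ • ξ ∨ x = -((‖ξ‖ : ℂ)⁻¹ • ξ))) ∧
      ‖(‖ξ‖ : ℂ)⁻¹ • ξ‖ = 1 ∧
      ∀ x : H, ‖x‖ < 1 → (⟪ξ, x⟫_ℂ + (a : ℂ))⁻¹ • (U (A x) + ξ) ≠ x := by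
  have ha2 : a ^ 2 = 1 + ‖ξ‖ ^ 2 := ha ▸ Real.sq_sqrt (by positivity)
  have hξa : ‖ξ‖ < a := ha ▸ (Real.lt_sqrt (norm_nonneg ξ)).2 (lt_one_add _)
  have hfix := apply_add_eq_inner_add_smul_iff hξ ha2 hA hU hUξ
  have hunit : ‖(‖ξ‖ : ℂ)⁻¹ • ξ‖ = 1 := norm_smul_inv_norm hξ
  refine ⟨fun x _ => hfix x, hunit, fun x hx h => ?_⟩
  have hc : ⟪ξ, x⟫_ℂ + (a : ℂ) ≠ 0 :=
    inner_add_ofReal_ne_zero ((mul_le_of_le_one_right (norm_nonneg ξ) hx.le).trans_lt hξa)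
  rcases (hfix x).1 ((inv_smul_eq_iff₀ hc).1 h) with rfl | rfl
  · exact hx.ne hunit
  · rw [norm_neg] at hx
    exact hx.ne hunit
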